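/- arXiv:math/0701834 — 2 statements merged into one kernel-verified Lean document; each statement's English description precedes it below -/
import Mathlib

section
/- Let f : 𝔻 → 𝔻 be a univalent (injective holomorphic) map and let τ ∈ ∂𝔻. Then there exists at most one point x ∈ ∂𝔻 such that the radial limit f*(x) = lim_{r→1} f(rx) exists and equals τ and the nontangential limit ∠lim_{z→x} f'(z) exists finitely. -/
open Complex MeasureTheory Filter Topology Set
open scoped ENNReal NNReal

noncomputable section

/-- The open unit disc `𝔻 = {z ∈ ℂ : |z| < 1}`. -/
def unitDisc : Set ℂ := {z : ℂ | ‖z‖ < 1}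

/-- The Poisson kernel `P(ζ, z) = (1 - |z|²)/|z - ζ|²`. -/
def poissonKernelDisc (ζ z : ℂ) : ℝ := (1 - ‖z‖ ^ 2) / ‖z - ζ‖ ^ 2

/-- `f` is a holomorphic self-map of the unit disc. -/
def IsHolSelfMap (f : ℂ → ℂ) : Prop :=
  DifferentiableOn ℂ f unitDisc ∧ MapsTo f unitDisc unitDisc

/-- `μ` is the Aleksandrov–Clark measure of `f` at `τ`: a finite positive Borel measure
concentrated on the unit circle such that
`Re((τ + f z)/(τ - f z)) = ∫ P(ζ, z) dμ(ζ)` for all `z ∈ 𝔻`. -/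
def IsClarkMeasure (f : ℂ → ℂ) (τ : ℂ) (μ : Measure ℂ) : Prop :=
  IsFiniteMeasure μ ∧ μ {z : ℂ | ‖z‖ ≠ 1} = 0 ∧
    ∀ z ∈ unitDisc, ((τ + f z) / (τ - f z)).re = ∫ ζ, poissonKernelDisc ζ z ∂μ

/-- A continuous semigroup `(φ_t)_{t ≥ 0}` of holomorphic self-maps of the unit disc. -/
def IsCtsSemigroup (φ : ℝ → ℂ → ℂ) : Prop :=
  (∀ t : ℝ, 0 ≤ t → IsHolSelfMap (φ t)) ∧
  (∀ z ∈ unitDisc, φ 0 z = z) ∧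
  (∀ s t : ℝ, 0 ≤ s → 0 ≤ t → ∀ z ∈ unitDisc, φ (s + t) z = φ s (φ t z)) ∧
  ContinuousOn (fun p : ℝ × ℂ => φ p.1 p.2) (Ici (0 : ℝ) ×ˢ unitDisc)

/-- `G` is the infinitesimal generator of the semigroup `(φ_t)`:
`∂φ_t(z)/∂t = G(φ_t(z))` for all `z ∈ 𝔻`, `t ≥ 0`. -/
def IsInfGenerator (φ : ℝ → ℂ → ℂ) (G : ℂ → ℂ) : Prop :=
  DifferentiableOn ℂ G unitDisc ∧
  ∀ z ∈ unitDisc, ∀ t : ℝ, 0 ≤ t → HasDerivAt (fun s : ℝ => φ s z) (G (φ t z)) t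

/-- Stolz angle at `ζ` with opening `M`. -/
def stolzAngle (ζ : ℂ) (M : ℝ) : Set ℂ :=
  {z : ℂ | ‖z‖ < 1 ∧ ‖ζ - z‖ ≤ M * (1 - ‖z‖)}

/-- Nontangential (angular) limit: `g(z) → L` as `z → ζ` within every Stolz angle. -/
def NTLimit (g : ℂ → ℂ) (ζ L : ℂ) : Prop :=
  ∀ M : ℝ, 1 ≤ M → Tendsto g (𝓝[stolzAngle ζ M] ζ) (𝓝 L)

/-- Radial limit `f*(ζ) = lim_{r → 1⁻} f(rζ) = L`. -/
def RadialLimit (f : ℂ → ℂ) (ζ L : ℂ) : Prop :=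
  Tendsto (fun r : ℝ => f ((r : ℂ) * ζ)) (𝓝[<] (1 : ℝ)) (𝓝 L)

/-- `τ` is a boundary regular fixed point of `f` with (finite) angular derivative `d`. -/
def IsBRFP (f : ℂ → ℂ) (τ d : ℂ) : Prop :=
  RadialLimit f τ τ ∧ NTLimit (fun z => (f z - τ) / (z - τ)) τ d

/-- `τ` is a boundary regular fixed point of the semigroup `(φ_t)` with boundary dilatation
coefficients `(e^{λ t})`. -/
def HasBRFPWithCoeffs (φ : ℝ → ℂ → ℂ) (τ : ℂ) (lam : ℝ) : Prop :=
  ∀ t : ℝ, 0 ≤ t → IsBRFP (φ t) τ (Real.exp (lam * t))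

/-- Normalized arclength (Lebesgue) measure `m` on the unit circle, viewed as a measure on `ℂ`,
with `m(∂𝔻) = 1`. -/
def circleLebesgue : Measure ℂ :=
  ENNReal.ofReal (2 * Real.pi)⁻¹ •
    Measure.map (fun θ : ℝ => Complex.exp (θ * Complex.I))
      (volume.restrict (Ioc (0 : ℝ) (2 * Real.pi)))

end

namespace Complex

/-- The complex absolute value, as an absolute value given by the norm. -/
noncomputable def abs : AbsoluteValue ℂ ℝ where
  toFun z := ‖z‖
  map_mul' := norm_mul
  nonneg' := norm_nonneg
  eq_zero' _ := norm_eq_zero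
  add_le' := norm_add_le

theorem abs_apply (z : ℂ) : Complex.abs z = ‖z‖ := rfl

theorem norm_eq_abs (z : ℂ) : ‖z‖ = Complex.abs z := rfl

theorem abs_ofReal (r : ℝ) : Complex.abs (r : ℂ) = |r| := by simp [Complex.abs_apply]

theorem abs_conj (z : ℂ) : Complex.abs ((starRingEnd ℂ) z) = Complex.abs z := by
  simp [Complex.abs_apply]

theorem continuous_abs : Continuous Complex.abs := by
  show Continuous (fun z : ℂ => ‖z‖)
  exact continuous_norm

theorem sq_abs (z : ℂ) : Complex.abs z ^ 2 = Complex.normSq z := Complex.sq_norm z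

theorem abs_re_le_abs (z : ℂ) : |z.re| ≤ Complex.abs z := Complex.abs_re_le_norm z

theorem re_le_abs (z : ℂ) : z.re ≤ Complex.abs z := Complex.re_le_norm z

end Complex

namespace Stmt8


lemma unitDisc_eq_ball : unitDisc = Metric.ball (0:ℂ) 1 := by
  ext z; simp [unitDisc, Metric.mem_ball, Complex.dist_eq]

lemma isOpen_unitDisc : IsOpen unitDisc := unitDisc_eq_ball ▸ Metric.isOpen_ball

lemma contDeriv {f : ℂ → ℂ} (hf : DifferentiableOn ℂ f unitDisc) :
    ContinuousOn (deriv f) unitDisc :=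
  ((hf.analyticOnNhd isOpen_unitDisc).deriv).continuousOn

/-- FTC estimate along a segment. -/
lemma norm_sub_sub_le {f : ℂ → ℂ} (hf : DifferentiableOn ℂ f unitDisc) {a b d : ℂ} {ε : ℝ}
    (hseg : segment ℝ a b ⊆ unitDisc)
    (hd : ∀ w ∈ segment ℝ a b, Complex.abs (deriv f w - d) ≤ ε) :
    Complex.abs (f b - f a - d * (b - a)) ≤ ε * Complex.abs (b - a) := by
  set γ : ℝ → ℂ := fun t => a + t • (b - a) with hγdef
  have hmem : ∀ t ∈ Icc (0:ℝ) 1, γ t ∈ segment ℝ a b := by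
    intro t ht
    rw [segment_eq_image']
    exact ⟨t, ht, rfl⟩
  have hγd : ∀ t : ℝ, HasDerivAt γ (b - a) t := by
    intro t
    simpa [hγdef] using ((hasDerivAt_id t).smul_const (b - a)).const_add a
  have hcomp : ∀ t ∈ Icc (0:ℝ) 1, HasDerivAt (fun s => f (γ s)) (deriv f (γ t) * (b - a)) t := by
    intro t ht
    have h1 : DifferentiableAt ℂ f (γ t) :=
      hf.differentiableAt (isOpen_unitDisc.mem_nhds (hseg (hmem t ht)))
    have := (h1.hasDerivAt).scomp t (hγd t)
    rw [smul_eq_mul, mul_comm] at this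
    exact this
  have hcontγ : Continuous γ := by fun_prop
  have hcont : ContinuousOn (fun t : ℝ => deriv f (γ t) * (b - a)) (Icc 0 1) := by
    apply ContinuousOn.mul _ continuousOn_const
    exact (contDeriv hf).comp hcontγ.continuousOn (fun t ht => hseg (hmem t ht))
  have hint : IntervalIntegrable (fun t : ℝ => deriv f (γ t) * (b - a)) MeasureTheory.volume 0 1 :=
    (hcont.mono (by rw [Set.uIcc_of_le zero_le_one])).intervalIntegrable
  have hftc : ∫ t in (0:ℝ)..1, deriv f (γ t) * (b - a) = f b - f a := by
    have := intervalIntegral.integral_eq_sub_of_hasDerivAt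
      (f := fun s => f (γ s)) (f' := fun t => deriv f (γ t) * (b - a))
      (by intro t ht; exact hcomp t (by rwa [Set.uIcc_of_le zero_le_one] at ht)) hint
    simpa [hγdef] using this
  have hconst : ∫ _ in (0:ℝ)..1, d * (b - a) = d * (b - a) := by simp
  have key : f b - f a - d * (b - a)
      = ∫ t in (0:ℝ)..1, (deriv f (γ t) - d) * (b - a) := by
    rw [← hftc]
    rw [show (fun t => (deriv f (γ t) - d) * (b - a)) = fun t => deriv f (γ t) * (b - a) - d * (b-a) by
      funext t; ring]
    rw [intervalIntegral.integral_sub hint intervalIntegrable_const, hconst]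
  rw [key]
  have := intervalIntegral.norm_integral_le_of_norm_le_const
    (C := ε * Complex.abs (b - a)) (f := fun t => (deriv f (γ t) - d) * (b - a))
    (a := 0) (b := 1) ?_
  · simpa [Complex.norm_eq_abs] using this
  · intro t ht
    rw [Set.uIoc_of_le zero_le_one] at ht
    have htm : γ t ∈ segment ℝ a b := hmem t ⟨le_of_lt ht.1, ht.2⟩
    have := hd _ htm
    calc ‖(deriv f (γ t) - d) * (b - a)‖ = Complex.abs (deriv f (γ t) - d) * Complex.abs (b - a) := by
          rw [Complex.norm_eq_abs, map_mul]
      _ ≤ ε * Complex.abs (b - a) := by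
          exact mul_le_mul_of_nonneg_right this (Complex.abs.nonneg _)

lemma nt_eps {g : ℂ → ℂ} {x d : ℂ} (h : NTLimit g x d) {M : ℝ} (hM : 1 ≤ M) {ε : ℝ} (hε : 0 < ε) :
    ∃ δ > 0, ∀ z ∈ stolzAngle x M, Complex.abs (z - x) < δ → Complex.abs (g z - d) < ε := by
  obtain ⟨δ, hδ, H⟩ := (Metric.tendsto_nhdsWithin_nhds.1 (h M hM)) ε hε
  exact ⟨δ, hδ, fun z hz hzd => by
    simpa [Complex.dist_eq, Complex.norm_eq_abs] using H hz (by simpa [Complex.dist_eq, Complex.norm_eq_abs] using hzd)⟩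

lemma abs_radial {x : ℂ} (hx : Complex.abs x = 1) {r : ℝ} (hr0 : 0 ≤ r) :
    Complex.abs ((r:ℂ)*x) = r := by
  rw [map_mul, hx, mul_one, Complex.abs_ofReal, _root_.abs_of_nonneg hr0]

lemma radial_mem_stolz {x : ℂ} (hx : Complex.abs x = 1) {r M : ℝ} (hr0 : 0 ≤ r) (hr1 : r < 1)
    (hM : 1 ≤ M) : (r:ℂ) * x ∈ stolzAngle x M := by
  show Complex.abs ((r:ℂ)*x) < 1 ∧ Complex.abs (x - (r:ℂ)*x) ≤ M * (1 - Complex.abs ((r:ℂ)*x))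
  refine ⟨by rw [abs_radial hx hr0]; exact hr1, ?_⟩
  have h2 : x - (r:ℂ)*x = ((1 - r : ℝ):ℂ) * x := by push_cast; ring
  rw [abs_radial hx hr0, h2, map_mul, hx, mul_one, Complex.abs_ofReal,
    _root_.abs_of_nonneg (by linarith)]
  nlinarith

/-- Main expansion: `f z = τ + d (z - x) + o(|z-x|)` on a Stolz angle. -/
lemma stolz_expansion {f : ℂ → ℂ} (hf : IsHolSelfMap f) {x τ d : ℂ} (hx : Complex.abs x = 1)
    (hrad : RadialLimit f x τ) (hnt : NTLimit (deriv f) x d) {M : ℝ} (hM : 1 ≤ M) {ε : ℝ}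
    (hε : 0 < ε) :
    ∃ δ > 0, ∀ z ∈ stolzAngle x M, Complex.abs (z - x) ≤ δ →
      Complex.abs (f z - τ - d * (z - x)) ≤ ε * Complex.abs (z - x) := by
  have hM2 : (1:ℝ) ≤ M + 2 := by linarith
  have hε3 : 0 < ε/3 := by linarith
  obtain ⟨δ₀, hδ₀, H0⟩ := nt_eps hnt hM2 hε3
  set δ : ℝ := min (δ₀/(M+2)) (1/2) with hδdef
  have hδpos : 0 < δ := lt_min (by positivity) (by norm_num)
  have hδhalf : δ ≤ 1/2 := min_le_right _ _
  have hδsmall : (M+1) * δ < δ₀ := by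
    have h1 : δ ≤ δ₀/(M+2) := min_le_left _ _
    have h3 : (M+1) * δ ≤ (M+1) * (δ₀/(M+2)) := by nlinarith
    have h2 : (M+1) * (δ₀/(M+2)) < δ₀ := by
      rw [mul_div_assoc', div_lt_iff₀ (by linarith)]
      nlinarith
    linarith
  -- Step A : radial estimate
  have stepA : ∀ r : ℝ, 1 - δ ≤ r → r < 1 →
      Complex.abs (f ((r:ℂ)*x) - τ - d * ((r:ℂ)*x - x)) ≤ (ε/3) * (1 - r) := by
    intro r hrδ hr1
    have hr0 : (0:ℝ) ≤ r := by linarith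
    have key : ∀ s : ℝ, r ≤ s → s < 1 →
        Complex.abs (f ((s:ℂ)*x) - f ((r:ℂ)*x) - d * ((s:ℂ)*x - (r:ℂ)*x))
          ≤ (ε/3) * (s - r) := by
      intro s hrs hs1
      have hsegu : ∀ w ∈ segment ℝ ((r:ℂ)*x) ((s:ℂ)*x),
          ∃ u : ℝ, r ≤ u ∧ u ≤ s ∧ w = (u:ℝ) * x := by
        intro w hw
        obtain ⟨a, b, ha, hb, hab, rfl⟩ := hw
        refine ⟨a*r + b*s, by nlinarith, by nlinarith, ?_⟩
        rw [Complex.real_smul, Complex.real_smul]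
        push_cast
        ring
      have hmem : ∀ w ∈ segment ℝ ((r:ℂ)*x) ((s:ℂ)*x), w ∈ stolzAngle x (M+2) ∧
          Complex.abs (w - x) < δ₀ := by
        intro w hw
        obtain ⟨u, hu1, hu2, rfl⟩ := hsegu w hw
        have hu0 : (0:ℝ) ≤ u := le_trans hr0 hu1
        have hu3 : u < 1 := lt_of_le_of_lt hu2 hs1
        refine ⟨radial_mem_stolz hx hu0 hu3 hM2, ?_⟩
        have h5 : ((u:ℝ):ℂ)*x - x = (((u - 1 : ℝ)):ℂ) * x := by push_cast; ring
        rw [h5, map_mul, hx, mul_one, Complex.abs_ofReal, _root_.abs_of_nonpos (by linarith)]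
        have h6 : 1 - u ≤ δ := by linarith
        have h9 : δ ≤ (M+1)*δ := by nlinarith
        linarith
      have hsub : segment ℝ ((r:ℂ)*x) ((s:ℂ)*x) ⊆ unitDisc :=
        fun w hw => (hmem w hw).1.1
      have hder : ∀ w ∈ segment ℝ ((r:ℂ)*x) ((s:ℂ)*x),
          Complex.abs (deriv f w - d) ≤ ε/3 := by
        intro w hw
        have h7 := H0 w (hmem w hw).1 ?_
        · exact le_of_lt h7
        · have h8 : w - x = -(x - w) := by ring
          have := (hmem w hw).2
          exact this
      have hb : Complex.abs ((s:ℂ)*x - (r:ℂ)*x) = s - r := by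
        have h5 : (s:ℂ)*x - (r:ℂ)*x = ((s - r : ℝ):ℂ)*x := by push_cast; ring
        rw [h5, abs_radial hx (by linarith)]
      have := norm_sub_sub_le hf.1 hsub hder
      rwa [hb] at this
    -- pass to the limit s → 1⁻
    have hlim1 : Tendsto (fun s : ℝ => (s:ℂ)*x) (𝓝[<] (1:ℝ)) (𝓝 x) := by
      have hc : Continuous fun s : ℝ => (s:ℂ)*x := by fun_prop
      have := (hc.tendsto 1).mono_left (nhdsWithin_le_nhds (s := Iio (1:ℝ)))
      simpa using this
    have hinner : Tendsto (fun s : ℝ => f ((s:ℂ)*x) - f ((r:ℂ)*x) - d * ((s:ℂ)*x - (r:ℂ)*x))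
        (𝓝[<] (1:ℝ)) (𝓝 (τ - f ((r:ℂ)*x) - d * (x - (r:ℂ)*x))) :=
      Tendsto.sub (hrad.sub tendsto_const_nhds)
        (Tendsto.mul tendsto_const_nhds (hlim1.sub tendsto_const_nhds))
    have hlhs := (Complex.continuous_abs.tendsto (τ - f ((r:ℂ)*x) - d * (x - (r:ℂ)*x))).comp hinner
    have hrhs : Tendsto (fun s : ℝ => (ε/3) * (s - r)) (𝓝[<] (1:ℝ)) (𝓝 ((ε/3) * (1 - r))) := by
      have hc : Continuous fun s : ℝ => (ε/3) * (s - r) := by fun_prop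
      exact (hc.tendsto 1).mono_left nhdsWithin_le_nhds
    have hev : ∀ᶠ s : ℝ in 𝓝[<] (1:ℝ),
        Complex.abs (f ((s:ℂ)*x) - f ((r:ℂ)*x) - d * ((s:ℂ)*x - (r:ℂ)*x)) ≤ (ε/3) * (s - r) := by
      have h1 : ∀ᶠ s : ℝ in 𝓝[<] (1:ℝ), r < s :=
        eventually_nhdsWithin_of_eventually_nhds (eventually_gt_nhds hr1)
      have h2 : ∀ᶠ s : ℝ in 𝓝[<] (1:ℝ), s < 1 := eventually_mem_nhdsWithin
      filter_upwards [h1, h2] with s hs1 hs2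
      exact key s hs1.le hs2
    have hfin := le_of_tendsto_of_tendsto hlhs hrhs hev
    have h5 : f ((r:ℂ)*x) - τ - d * ((r:ℂ)*x - x) = -(τ - f ((r:ℂ)*x) - d * (x - (r:ℂ)*x)) := by
      ring
    rw [h5, Complex.abs.map_neg]
    exact hfin
  -- Step B : general point of the Stolz angle
  refine ⟨δ, hδpos, ?_⟩
  intro z hz hzδ
  obtain ⟨hz1, hz2⟩ : Complex.abs z < 1 ∧ Complex.abs (x - z) ≤ M * (1 - Complex.abs z) := hz
  obtain ⟨r, hrdef⟩ : ∃ r : ℝ, Complex.abs z = r := ⟨_, rfl⟩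
  rw [hrdef] at hz1 hz2
  have hr1 : r < 1 := hz1
  have hr0 : 0 ≤ r := hrdef ▸ Complex.abs.nonneg z
  have hzx0 : 0 ≤ Complex.abs (z - x) := Complex.abs.nonneg _
  have hxz : 1 - r ≤ Complex.abs (z - x) := by
    have h5 : Complex.abs x ≤ Complex.abs (x - z) + Complex.abs z := by
      have := Complex.abs.add_le (x - z) z
      simpa using this
    have h6 : Complex.abs (x - z) = Complex.abs (z - x) := by
      rw [show x - z = -(z - x) by ring, Complex.abs.map_neg]
    rw [hx] at h5; rw [h6] at h5; linarith
  have hrδ : 1 - δ ≤ r := by linarith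
  have habsxr : Complex.abs (x - (r:ℂ)*x) = 1 - r := by
    rw [show x - (r:ℂ)*x = ((1 - r : ℝ):ℂ)*x by push_cast; ring, abs_radial hx (by linarith)]
  -- segment from r x to z stays in a bigger Stolz angle close to x
  have hmem : ∀ w ∈ segment ℝ ((r:ℂ)*x) z, w ∈ stolzAngle x (M+2) ∧
      Complex.abs (w - x) < δ₀ := by
    intro w hw
    obtain ⟨a, b, ha, hb, hab, rfl⟩ := hw
    have hsmul : ∀ (c : ℝ) (u : ℂ), 0 ≤ c → Complex.abs (c • u) = c * Complex.abs u := by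
      intro c u hc
      rw [← Complex.norm_eq_abs, ← Complex.norm_eq_abs, norm_smul, Real.norm_eq_abs,
        _root_.abs_of_nonneg hc]
    have habs : Complex.abs (a • ((r:ℂ)*x) + b • z) ≤ r := by
      calc Complex.abs (a • ((r:ℂ)*x) + b • z)
          ≤ Complex.abs (a • ((r:ℂ)*x)) + Complex.abs (b • z) := Complex.abs.add_le _ _
        _ = a * r + b * r := by
            rw [hsmul a _ ha, hsmul b _ hb, abs_radial hx hr0, hrdef]
        _ = r := by nlinarith
    have hw1 : Complex.abs (a • ((r:ℂ)*x) + b • z) < 1 := lt_of_le_of_lt habs hr1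
    have h5 : x - (a • ((r:ℂ)*x) + b • z) = a • (x - (r:ℂ)*x) + b • (x - z) := by
      have habC : (a:ℂ) + (b:ℂ) = 1 := by exact_mod_cast hab
      rw [Complex.real_smul, Complex.real_smul, Complex.real_smul, Complex.real_smul]
      linear_combination (-x + (r:ℂ)*x - ((a:ℂ)*((r:ℂ)*x) + (b:ℂ)*z) + x) * 0 +
        (x - ((r:ℂ)*x) * 0 - x + x) * 0 + (-(x:ℂ)) * habC + ((r:ℂ)*x + z - x - (r:ℂ)*x + x - z) * 0
    have hdist : Complex.abs (x - (a • ((r:ℂ)*x) + b • z)) ≤ (M+1) * (1 - r) := by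
      rw [h5]
      calc Complex.abs (a • (x - (r:ℂ)*x) + b • (x - z))
          ≤ Complex.abs (a • (x - (r:ℂ)*x)) + Complex.abs (b • (x - z)) :=
            Complex.abs.add_le _ _
        _ = a * Complex.abs (x - (r:ℂ)*x) + b * Complex.abs (x - z) := by
            rw [hsmul a _ ha, hsmul b _ hb]
        _ ≤ a * (1 - r) + b * (M * (1 - r)) := by
            rw [habsxr]
            have h12 : b * Complex.abs (x - z) ≤ b * (M * (1 - r)) :=
              mul_le_mul_of_nonneg_left hz2 hb
            linarith
        _ ≤ (M+1) * (1 - r) := by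
            have e2 : a + b*M ≤ M+1 := by
              have e4 : a*1 ≤ a*M := mul_le_mul_of_nonneg_left hM ha
              have e5 : a*M + b*M = M := by rw [← add_mul, hab, one_mul]
              linarith
            have e3 : (a + b*M) * (1-r) ≤ (M+1) * (1-r) :=
              mul_le_mul_of_nonneg_right e2 (by linarith)
            nlinarith
    constructor
    · refine ⟨hw1, ?_⟩
      have h7 : 1 - r ≤ 1 - Complex.abs (a • ((r:ℂ)*x) + b • z) := by linarith
      have h8' : (M+1) * (1-r) ≤ (M+1) * (1 - Complex.abs (a • ((r:ℂ)*x) + b • z)) :=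
        mul_le_mul_of_nonneg_left h7 (by linarith)
      have h9' : (M+1) * (1 - Complex.abs (a • ((r:ℂ)*x) + b • z))
          ≤ (M+2) * (1 - Complex.abs (a • ((r:ℂ)*x) + b • z)) :=
        mul_le_mul_of_nonneg_right (by linarith) (by linarith)
      exact le_trans hdist (le_trans h8' h9')
    · have h8 : Complex.abs ((a • ((r:ℂ)*x) + b • z) - x)
          = Complex.abs (x - (a • ((r:ℂ)*x) + b • z)) := by
        rw [show (a • ((r:ℂ)*x) + b • z) - x = -(x - (a • ((r:ℂ)*x) + b • z)) by ring,
          Complex.abs.map_neg]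
      rw [h8]
      have h9 : 1 - r ≤ δ := le_trans hxz hzδ
      have h10 : (M+1) * (1 - r) ≤ (M+1) * δ :=
        mul_le_mul_of_nonneg_left h9 (by linarith)
      exact lt_of_le_of_lt (le_trans hdist h10) hδsmall
  have hsub : segment ℝ ((r:ℂ)*x) z ⊆ unitDisc := fun w hw => (hmem w hw).1.1
  have hder : ∀ w ∈ segment ℝ ((r:ℂ)*x) z, Complex.abs (deriv f w - d) ≤ ε/3 :=
    fun w hw => le_of_lt (H0 w (hmem w hw).1 (hmem w hw).2)
  have hBo := norm_sub_sub_le hf.1 hsub hder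
  have hzr : Complex.abs (z - (r:ℂ)*x) ≤ 2 * Complex.abs (z - x) := by
    calc Complex.abs (z - (r:ℂ)*x)
        = Complex.abs ((z - x) + (x - (r:ℂ)*x)) := by
          rw [show z - (r:ℂ)*x = (z - x) + (x - (r:ℂ)*x) by ring]
      _ ≤ Complex.abs (z - x) + Complex.abs (x - (r:ℂ)*x) := Complex.abs.add_le _ _
      _ = Complex.abs (z - x) + (1 - r) := by rw [habsxr]
      _ ≤ 2 * Complex.abs (z - x) := by linarith
  have hA := stepA r hrδ hr1
  have hsplit : f z - τ - d * (z - x)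
      = (f z - f ((r:ℂ)*x) - d * (z - (r:ℂ)*x)) + (f ((r:ℂ)*x) - τ - d * ((r:ℂ)*x - x)) := by
    ring
  rw [hsplit]
  calc Complex.abs ((f z - f ((r:ℂ)*x) - d * (z - (r:ℂ)*x))
        + (f ((r:ℂ)*x) - τ - d * ((r:ℂ)*x - x)))
      ≤ Complex.abs (f z - f ((r:ℂ)*x) - d * (z - (r:ℂ)*x))
        + Complex.abs (f ((r:ℂ)*x) - τ - d * ((r:ℂ)*x - x)) := Complex.abs.add_le _ _
    _ ≤ (ε/3) * Complex.abs (z - (r:ℂ)*x) + (ε/3) * (1 - r) := add_le_add hBo hA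
    _ ≤ (ε/3) * (2 * Complex.abs (z - x)) + (ε/3) * Complex.abs (z - x) := by
        have h10 : (ε/3) * Complex.abs (z - (r:ℂ)*x) ≤ (ε/3) * (2 * Complex.abs (z - x)) :=
          mul_le_mul_of_nonneg_left hzr (by linarith)
        have h11 : (ε/3) * (1 - r) ≤ (ε/3) * Complex.abs (z - x) :=
          mul_le_mul_of_nonneg_left hxz (by linarith)
        linarith
    _ = ε * Complex.abs (z - x) := by ring
/-- Schwarz–Pick type lower bound: `1 - |f z| ≥ c (1 - |z|)`. -/
lemma one_sub_abs_lower {f : ℂ → ℂ} (hf : IsHolSelfMap f) :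
    ∃ c : ℝ, 0 < c ∧ ∀ z ∈ unitDisc, c * (1 - Complex.abs z) ≤ 1 - Complex.abs (f z) := by
  have h0 : (0:ℂ) ∈ unitDisc := by simp [unitDisc]
  set a : ℂ := f 0 with hadef
  have ha : Complex.abs a < 1 := hf.2 h0
  have ha0 : 0 ≤ Complex.abs a := Complex.abs.nonneg a
  have hnsa : Complex.normSq a < 1 := by
    rw [← Complex.sq_abs]; nlinarith
  set φ : ℂ → ℂ := fun w => (a - w) / (1 - (starRingEnd ℂ) a * w) with hφdef
  have hden : ∀ w : ℂ, Complex.abs w < 1 → 1 - (starRingEnd ℂ) a * w ≠ 0 := by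
    intro w hw h
    have h1 : Complex.abs ((starRingEnd ℂ) a * w) < 1 := by
      rw [map_mul, Complex.abs_conj]
      nlinarith [Complex.abs.nonneg w]
    have h2 : (starRingEnd ℂ) a * w = 1 := by linear_combination -h
    rw [h2] at h1; simp at h1
  have hkey : ∀ w : ℂ, Complex.normSq (1 - (starRingEnd ℂ) a * w) - Complex.normSq (a - w)
      = (1 - Complex.normSq a) * (1 - Complex.normSq w) := by
    intro w
    simp only [Complex.normSq_apply, Complex.sub_re, Complex.sub_im, Complex.mul_re,
      Complex.mul_im, Complex.one_re, Complex.one_im, Complex.conj_re, Complex.conj_im]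
    ring
  have hnsφ : ∀ w : ℂ, Complex.abs w < 1 → Complex.normSq (φ w) = Complex.normSq (a - w) /
      Complex.normSq (1 - (starRingEnd ℂ) a * w) := by
    intro w hw
    rw [hφdef]; exact map_div₀ Complex.normSq _ _
  have hmaps : ∀ w : ℂ, Complex.abs w < 1 → Complex.abs (φ w) < 1 := by
    intro w hw
    have h2 : 0 < Complex.normSq (1 - (starRingEnd ℂ) a * w) :=
      Complex.normSq_pos.2 (hden w hw)
    have hnsw : Complex.normSq w < 1 := by
      rw [← Complex.sq_abs]; nlinarith [Complex.abs.nonneg w]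
    have h3 : 0 < (1 - Complex.normSq a) * (1 - Complex.normSq w) := by nlinarith
    have h4 : Complex.normSq (φ w) < 1 := by
      rw [hnsφ w hw, div_lt_one h2]
      have := hkey w
      linarith
    have := Complex.sq_abs (φ w)
    nlinarith [Complex.abs.nonneg (φ w)]
  -- φ and f are differentiable, Schwarz applies to φ ∘ f
  have hφdiff : DifferentiableOn ℂ φ unitDisc := by
    apply DifferentiableOn.div
    · exact (differentiableOn_const a).sub differentiableOn_id
    · exact (differentiableOn_const 1).sub ((differentiableOn_const _).mul differentiableOn_id)
    · intro w hw; exact hden w hw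
  have hgdiff : DifferentiableOn ℂ (φ ∘ f) (Metric.ball (0:ℂ) 1) := by
    rw [← unitDisc_eq_ball]
    exact hφdiff.comp hf.1 hf.2
  have hgmaps : MapsTo (φ ∘ f) (Metric.ball (0:ℂ) 1) (Metric.ball (0:ℂ) 1) := by
    rw [← unitDisc_eq_ball]
    intro w hw
    have : Complex.abs (f w) < 1 := hf.2 hw
    exact hmaps _ this
  have hg0 : (φ ∘ f) 0 = 0 := by
    simp only [Function.comp_apply, ← hadef, hφdef]
    simp
  have schwarz : ∀ z : ℂ, Complex.abs z < 1 → Complex.abs (φ (f z)) ≤ Complex.abs z := by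
    intro z hz
    exact Complex.norm_le_norm_of_mapsTo_ball_self hgdiff (hgmaps.mono_right Metric.ball_subset_closedBall) hg0 hz
  refine ⟨(1 - Complex.abs a)^2 / 2, by nlinarith, ?_⟩
  intro z hz
  have hz1 : Complex.abs z < 1 := hz
  have hz0 : 0 ≤ Complex.abs z := Complex.abs.nonneg z
  set w : ℂ := f z with hwdef
  have hw1 : Complex.abs w < 1 := hf.2 hz
  have hw0 : 0 ≤ Complex.abs w := Complex.abs.nonneg w
  have h2 : 0 < Complex.normSq (1 - (starRingEnd ℂ) a * w) :=
    Complex.normSq_pos.2 (hden w hw1)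
  have hsch : Complex.normSq (φ w) ≤ (Complex.abs z)^2 := by
    have h5 := schwarz z hz1
    have h6 := Complex.sq_abs (φ w)
    nlinarith [Complex.abs.nonneg (φ w)]
  have h7 : Complex.normSq (a - w) ≤ (Complex.abs z)^2 * Complex.normSq (1 - (starRingEnd ℂ) a * w) := by
    have := hnsφ w hw1
    rw [this] at hsch
    calc Complex.normSq (a - w)
        = Complex.normSq (a - w) / Complex.normSq (1 - (starRingEnd ℂ) a * w)
          * Complex.normSq (1 - (starRingEnd ℂ) a * w) := (div_mul_cancel₀ _ (ne_of_gt h2)).symm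
      _ ≤ (Complex.abs z)^2 * Complex.normSq (1 - (starRingEnd ℂ) a * w) :=
          mul_le_mul_of_nonneg_right hsch (le_of_lt h2)
  have h8 : (1 - Complex.normSq a) * (1 - Complex.normSq w)
      ≥ (1 - (Complex.abs z)^2) * Complex.normSq (1 - (starRingEnd ℂ) a * w) := by
    have := hkey w
    nlinarith [Complex.normSq_nonneg (a - w)]
  have h9 : (1 - Complex.abs a)^2 ≤ Complex.normSq (1 - (starRingEnd ℂ) a * w) := by
    have h10 : 1 - Complex.abs a ≤ Complex.abs (1 - (starRingEnd ℂ) a * w) := by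
      have h11 : Complex.abs ((starRingEnd ℂ) a * w) ≤ Complex.abs a := by
        rw [map_mul, Complex.abs_conj]
        nlinarith
      have h12 : Complex.abs 1 ≤ Complex.abs (1 - (starRingEnd ℂ) a * w)
          + Complex.abs ((starRingEnd ℂ) a * w) := by
        have := Complex.abs.add_le (1 - (starRingEnd ℂ) a * w) ((starRingEnd ℂ) a * w)
        simpa using this
      simp only [map_one] at h12
      linarith
    have h13 := Complex.sq_abs (1 - (starRingEnd ℂ) a * w)
    nlinarith [Complex.abs.nonneg (1 - (starRingEnd ℂ) a * w)]
  -- combine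
  have hnsw : Complex.normSq w = (Complex.abs w)^2 := (Complex.sq_abs w).symm
  have hnsa' : 0 ≤ 1 - Complex.normSq a := by linarith
  have hfin : (1 - (Complex.abs z)^2) * (1 - Complex.abs a)^2 ≤ 1 - (Complex.abs w)^2 := by
    have h14 : (1 - (Complex.abs z)^2) * (1 - Complex.abs a)^2
        ≤ (1 - (Complex.abs z)^2) * Complex.normSq (1 - (starRingEnd ℂ) a * w) :=
      mul_le_mul_of_nonneg_left h9 (by nlinarith)
    have hnsw1 : Complex.normSq w < 1 := by rw [hnsw]; nlinarith
    have h15 : (1 - Complex.normSq a) * (1 - Complex.normSq w) ≤ 1 - Complex.normSq w := by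
      nlinarith [Complex.normSq_nonneg a]
    rw [hnsw] at h15 h8
    nlinarith
  nlinarith [sq_nonneg (1 - Complex.abs a), hfin]
set_option maxHeartbeats 1000000 in
/-- The direction of the angular derivative: `d x = λ τ` with `λ > 0`. -/
lemma direction {f : ℂ → ℂ} (hf : IsHolSelfMap f) {x τ d : ℂ} (hx : Complex.abs x = 1)
    (hτ : Complex.abs τ = 1) (hrad : RadialLimit f x τ) (hnt : NTLimit (deriv f) x d) :
    ∃ lam : ℝ, 0 < lam ∧ d * x = (lam : ℂ) * τ := by
  obtain ⟨W, hWdef⟩ : ∃ W : ℂ, W = (starRingEnd ℂ) τ * (d * x) := ⟨_, rfl⟩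
  have hττ : τ * (starRingEnd ℂ) τ = 1 := by
    rw [Complex.mul_conj]
    rw [← Complex.sq_abs, hτ]; norm_num
  have key : ∀ ξ : ℂ, ξ.re < 0 → (W * ξ).re ≤ 0 := by
    intro ξ hξre
    by_contra hpos0
    push_neg at hpos0
    obtain ⟨η, hηdef⟩ : ∃ η : ℝ, η = (W * ξ).re := ⟨_, rfl⟩
    have hpos : 0 < η := hηdef ▸ hpos0
    have hξ0 : ξ ≠ 0 := fun h => by simp [h] at hξre
    have haξ : 0 < Complex.abs ξ := Complex.abs.pos hξ0
    obtain ⟨M, hM, hM2⟩ : ∃ M : ℝ, 1 ≤ M ∧ 4 * Complex.abs ξ / (-ξ.re) ≤ M :=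
      ⟨max 1 (4 * Complex.abs ξ / (-ξ.re)), le_max_left _ _, le_max_right _ _⟩
    have hε : 0 < η / (2 * Complex.abs ξ) := div_pos hpos (by positivity)
    obtain ⟨δ, hδ, H⟩ := stolz_expansion hf hx hrad hnt hM hε
    have hξrene : ξ.re ≠ 0 := ne_of_lt hξre
    obtain ⟨t, ht, ht1, ht2⟩ : ∃ t : ℝ, 0 < t ∧ t ≤ δ / Complex.abs ξ ∧
        t ≤ (-ξ.re) / (Complex.abs ξ)^2 := by
      refine ⟨min (δ / Complex.abs ξ) ((-ξ.re) / (Complex.abs ξ)^2), ?_, min_le_left _ _,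
        min_le_right _ _⟩
      have hp1 : 0 < δ / Complex.abs ξ := by positivity
      have hp2 : 0 < (-ξ.re) / (Complex.abs ξ)^2 := div_pos (by linarith) (by positivity)
      exact lt_min hp1 hp2
    obtain ⟨z, hzdef⟩ : ∃ z : ℂ, z = ((1:ℂ) + (t:ℂ) * ξ) * x := ⟨_, rfl⟩
    have hξ2 : ξ.re^2 + ξ.im^2 = (Complex.abs ξ)^2 := by
      rw [Complex.sq_abs, Complex.normSq_apply]; ring
    have habs2 : (Complex.abs z)^2 = 1 + 2*t*ξ.re + t^2*(Complex.abs ξ)^2 := by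
      rw [hzdef, map_mul, hx, mul_one, Complex.sq_abs, Complex.normSq_apply]
      simp only [Complex.add_re, Complex.add_im, Complex.one_re, Complex.one_im,
        Complex.mul_re, Complex.mul_im, Complex.ofReal_re, Complex.ofReal_im]
      linear_combination t^2 * hξ2
    have htaξ : t * Complex.abs ξ ≤ δ := by
      have h1 : t ≤ δ / Complex.abs ξ := ht1
      calc t * Complex.abs ξ ≤ (δ / Complex.abs ξ) * Complex.abs ξ :=
            mul_le_mul_of_nonneg_right h1 haξ.le
        _ = δ := by field_simp
    have htre : t * (Complex.abs ξ)^2 ≤ -ξ.re := by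
      have h1 : t ≤ (-ξ.re)/(Complex.abs ξ)^2 := ht2
      calc t * (Complex.abs ξ)^2 ≤ ((-ξ.re)/(Complex.abs ξ)^2) * (Complex.abs ξ)^2 :=
            mul_le_mul_of_nonneg_right h1 (by positivity)
        _ = -ξ.re := by field_simp
    have habslt : (Complex.abs z)^2 < 1 := by
      rw [habs2]; nlinarith
    have habsle1 : Complex.abs z < 1 := by nlinarith [Complex.abs.nonneg z]
    have hone : t * (-ξ.re) / 2 ≤ 1 - Complex.abs z := by
      have h1 : t * (-ξ.re) ≤ 1 - (Complex.abs z)^2 := by rw [habs2]; nlinarith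
      nlinarith [Complex.abs.nonneg z]
    have hzmx : z - x = (t:ℂ)*ξ*x := by rw [hzdef]; ring
    have habszx : Complex.abs (z - x) = t * Complex.abs ξ := by
      rw [hzmx, map_mul, map_mul, hx, mul_one, Complex.abs_ofReal, _root_.abs_of_nonneg ht.le]
    have hzstolz : z ∈ stolzAngle x M := by
      refine ⟨habsle1, ?_⟩
      show Complex.abs (x - z) ≤ M * (1 - Complex.abs z)
      have h2 : Complex.abs (x - z) = t * Complex.abs ξ := by
        rw [show x - z = -(z - x) by ring, Complex.abs.map_neg, habszx]
      rw [h2]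
      have h3 : t * Complex.abs ξ = (4 * Complex.abs ξ / (-ξ.re)) * (t * (-ξ.re)/4) := by
        field_simp [hξrene]
      rw [h3]
      have h4 : (0:ℝ) ≤ t * (-ξ.re)/4 :=
        div_nonneg (mul_nonneg ht.le (by linarith)) (by norm_num)
      have h5 : t * (-ξ.re)/4 ≤ 1 - Complex.abs z := by
        have h6 : (0:ℝ) ≤ t * (-ξ.re) := mul_nonneg ht.le (by linarith)
        linarith [hone]
      calc (4 * Complex.abs ξ / (-ξ.re)) * (t * (-ξ.re)/4)
          ≤ M * (t * (-ξ.re)/4) := mul_le_mul_of_nonneg_right hM2 h4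
        _ ≤ M * (1 - Complex.abs z) := mul_le_mul_of_nonneg_left h5 (by linarith)
    have hexp := H z hzstolz (by rw [habszx]; exact htaξ)
    have hfz : Complex.abs (f z) < 1 := hf.2 (show z ∈ unitDisc from habsle1)
    have hre1 : ((starRingEnd ℂ) τ * f z).re ≤ Complex.abs (f z) := by
      calc ((starRingEnd ℂ) τ * f z).re ≤ Complex.abs ((starRingEnd ℂ) τ * f z) :=
            Complex.re_le_abs _
        _ = Complex.abs (f z) := by rw [map_mul, Complex.abs_conj, hτ, one_mul]
    have hfzeq : f z = τ + d*(z - x) + (f z - τ - d*(z - x)) := by ring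
    have hre2 : ((starRingEnd ℂ) τ * f z).re
        = 1 + t*η + ((starRingEnd ℂ) τ * (f z - τ - d*(z - x))).re := by
      have h6 : (starRingEnd ℂ) τ * f z
          = 1 + (t:ℂ) * (W * ξ) + (starRingEnd ℂ) τ * (f z - τ - d*(z - x)) := by
        rw [hWdef]
        have : (starRingEnd ℂ) τ * τ = 1 := by rw [mul_comm]; exact hττ
        calc (starRingEnd ℂ) τ * f z
            = (starRingEnd ℂ) τ * (τ + d*(z - x) + (f z - τ - d*(z - x))) := by ring
          _ = (starRingEnd ℂ) τ * τ + (starRingEnd ℂ) τ * (d*((t:ℂ)*ξ*x))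
              + (starRingEnd ℂ) τ * (f z - τ - d*(z - x)) := by rw [← hzmx]; ring
          _ = 1 + (t:ℂ) * ((starRingEnd ℂ) τ * (d * x) * ξ)
              + (starRingEnd ℂ) τ * (f z - τ - d*(z - x)) := by rw [this]; ring
      rw [h6]
      simp only [Complex.add_re, Complex.one_re, Complex.re_ofReal_mul]
      rw [hηdef]
    have hE : Complex.abs (f z - τ - d*(z - x)) ≤ t * η / 2 := by
      have := hexp
      rw [habszx] at this
      calc Complex.abs (f z - τ - d*(z - x))
          ≤ η / (2 * Complex.abs ξ) * (t * Complex.abs ξ) := this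
        _ = t * η / 2 := by field_simp
    have hre3 : -(t * η / 2) ≤ ((starRingEnd ℂ) τ * (f z - τ - d*(z - x))).re := by
      have h7 : |((starRingEnd ℂ) τ * (f z - τ - d*(z - x))).re|
          ≤ Complex.abs ((starRingEnd ℂ) τ * (f z - τ - d*(z - x))) := Complex.abs_re_le_abs _
      have h8 : Complex.abs ((starRingEnd ℂ) τ * (f z - τ - d*(z - x)))
          = Complex.abs (f z - τ - d*(z - x)) := by rw [map_mul, Complex.abs_conj, hτ, one_mul]
      rw [h8] at h7
      have := abs_le.1 h7
      linarith [this.1, hE]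
    rw [hre2] at hre1
    nlinarith
  -- W is a nonnegative real multiple of 1
  have hWre : 0 ≤ W.re := by
    have h := key ⟨-1, 0⟩ (show (-1:ℝ) < 0 by norm_num)
    have h' : W.re * (-1) - W.im * 0 ≤ 0 := h
    linarith
  have hWim : W.im = 0 := by
    have h1 : ∀ ε : ℝ, 0 < ε → W.im ≤ ε * W.re := by
      intro ε hε
      have h := key ⟨-ε, -1⟩ (show -ε < 0 by linarith)
      have h' : W.re * (-ε) - W.im * (-1) ≤ 0 := h
      nlinarith
    have h2 : ∀ ε : ℝ, 0 < ε → -W.im ≤ ε * W.re := by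
      intro ε hε
      have h := key ⟨-ε, 1⟩ (show -ε < 0 by linarith)
      have h' : W.re * (-ε) - W.im * 1 ≤ 0 := h
      nlinarith
    by_contra himne
    rcases lt_or_gt_of_ne himne with hlt | hgt
    · have h3 := h2 ((-W.im) / (2 * (W.re + 1))) (div_pos (by linarith) (by linarith))
      have h4 : (-W.im) / (2 * (W.re + 1)) * W.re < -W.im := by
        rw [div_mul_eq_mul_div, div_lt_iff₀ (by linarith)]
        nlinarith
      linarith
    · have h3 := h1 (W.im / (2 * (W.re + 1))) (div_pos (by linarith) (by linarith))
      have h4 : W.im / (2 * (W.re + 1)) * W.re < W.im := by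
        rw [div_mul_eq_mul_div, div_lt_iff₀ (by linarith)]
        nlinarith
      linarith
  obtain ⟨lam, hlam⟩ : ∃ lam : ℝ, lam = W.re := ⟨_, rfl⟩
  have h1 : W = ((lam : ℝ) : ℂ) := by
    apply Complex.ext
    · rw [hlam]; simp
    · simp [hWim]
  have hdx : d * x = ((lam : ℝ) : ℂ) * τ := by
    calc d * x = τ * ((starRingEnd ℂ) τ * (d * x)) := by
          rw [← mul_assoc, hττ, one_mul]
      _ = τ * W := by rw [hWdef]
      _ = ((lam : ℝ) : ℂ) * τ := by rw [h1]; ring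
  -- positivity of W.re via the Schwarz–Pick lower bound
  obtain ⟨c, hc, hlow⟩ := one_sub_abs_lower hf
  rw [← hlam] at hWre
  rcases eq_or_lt_of_le hWre with heq | hpos
  swap
  · exact ⟨lam, hpos, hdx⟩
  exfalso
  have hd0 : d * x = 0 := by rw [hdx, ← heq]; simp
  obtain ⟨δ, hδ, H⟩ := stolz_expansion hf hx hrad hnt (le_refl (1:ℝ)) (show (0:ℝ) < c/2 by linarith)
  obtain ⟨r, hr0, hr1, hrδ⟩ : ∃ r : ℝ, 0 ≤ r ∧ r < 1 ∧ 1 - r ≤ δ := by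
    refine ⟨1 - min δ (1/2), ?_, ?_, ?_⟩
    · have := min_le_right δ (1/2); linarith
    · have : 0 < min δ (1/2) := lt_min hδ (by norm_num)
      linarith
    · have := min_le_left δ (1/2); linarith
  have hzx : ((r:ℂ)*x - x) = ((r - 1 : ℝ) : ℂ) * x := by push_cast; ring
  have habszx : Complex.abs ((r:ℂ)*x - x) = 1 - r := by
    rw [hzx, map_mul, hx, mul_one, Complex.abs_ofReal, _root_.abs_of_nonpos (by linarith)]
    ring
  have hmem := radial_mem_stolz hx hr0 hr1 (le_refl (1:ℝ))
  have hexp := H ((r:ℂ)*x) hmem (by rw [habszx]; exact hrδ)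
  have hdz : d * ((r:ℂ)*x - x) = 0 := by
    rw [hzx, show d * (((r - 1 : ℝ) : ℂ) * x) = ((r - 1 : ℝ) : ℂ) * (d * x) by ring, hd0, mul_zero]
  rw [hdz, sub_zero, habszx] at hexp
  have hfz : Complex.abs (f ((r:ℂ)*x)) < 1 := hf.2 (show (r:ℂ)*x ∈ unitDisc from hmem.1)
  have h1 : 1 - Complex.abs (f ((r:ℂ)*x)) ≤ Complex.abs (f ((r:ℂ)*x) - τ) := by
    have h2 : Complex.abs τ ≤ Complex.abs (τ - f ((r:ℂ)*x)) + Complex.abs (f ((r:ℂ)*x)) := by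
      have := Complex.abs.add_le (τ - f ((r:ℂ)*x)) (f ((r:ℂ)*x))
      simpa using this
    have h3 : Complex.abs (τ - f ((r:ℂ)*x)) = Complex.abs (f ((r:ℂ)*x) - τ) := by
      rw [show τ - f ((r:ℂ)*x) = -(f ((r:ℂ)*x) - τ) by ring, Complex.abs.map_neg]
    rw [hτ] at h2; rw [h3] at h2; linarith
  have h4 := hlow ((r:ℂ)*x) hmem.1
  rw [abs_radial hx hr0] at h4
  have h5 : 0 < 1 - r := by linarith
  nlinarith

end Stmt8

open Stmt8

noncomputable section Stmt8Aux
open Stmt8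
/-- A (nonlinear) right inverse of multiplication by a nonzero complex number. -/
noncomputable def mulRightInv (d : ℂ) (hd : d ≠ 0) :
    ContinuousLinearMap.NonlinearRightInverse (d • ContinuousLinearMap.id ℂ ℂ) where
  toFun := fun y => d⁻¹ * y
  nnnorm := ‖d‖₊⁻¹
  bound' := fun y => by
    rw [norm_mul, norm_inv, NNReal.coe_inv, coe_nnnorm]
  right_inv' := fun y => by
    simp only [ContinuousLinearMap.smul_apply, ContinuousLinearMap.id_apply, smul_eq_mul]
    field_simp


end Stmt8Aux

/-- a univalent self-map of the disc has at most one boundary point with radial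
limit `τ` at which the nontangential limit of `f'` exists finitely. -/
theorem statement8
    (f : ℂ → ℂ) (hf : IsHolSelfMap f) (hinj : Set.InjOn f unitDisc)
    (τ : ℂ) (hτ : ‖τ‖ = 1) :
    ∀ x₁ x₂ : ℂ, ‖x₁‖ = 1 → ‖x₂‖ = 1 →
      RadialLimit f x₁ τ → RadialLimit f x₂ τ →
      (∃ d₁ : ℂ, NTLimit (deriv f) x₁ d₁) → (∃ d₂ : ℂ, NTLimit (deriv f) x₂ d₂) →
      x₁ = x₂ := by
  intro x₁ x₂ hx₁ hx₂ hr₁ hr₂ hnt₁ hnt₂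
  rw [Complex.norm_eq_abs] at hτ hx₁ hx₂
  obtain ⟨d₁, hd₁⟩ := hnt₁
  obtain ⟨d₂, hd₂⟩ := hnt₂
  by_contra hne
  obtain ⟨l₁, hl₁, hdx₁⟩ := direction hf hx₁ hτ hr₁ hd₁
  obtain ⟨l₂, hl₂, hdx₂⟩ := direction hf hx₂ hτ hr₂ hd₂
  have habs_d₂ : Complex.abs d₂ = l₂ := by
    have h := congrArg Complex.abs hdx₂
    rwa [map_mul, hx₂, mul_one, map_mul, Complex.abs_ofReal, hτ, mul_one,
      _root_.abs_of_nonneg hl₂.le] at h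
  have hd₂0 : d₂ ≠ 0 := by
    intro h
    rw [h] at habs_d₂
    simp only [map_zero] at habs_d₂
    linarith
  obtain ⟨s, hs, hsl⟩ : ∃ s : ℝ, 0 < s ∧ s * l₂ = l₁ :=
    ⟨l₁ / l₂, div_pos hl₁ hl₂, by field_simp⟩
  obtain ⟨δ₃, hδ₃, H₃⟩ := nt_eps hd₂ (show (1:ℝ) ≤ 3 by norm_num) (show (0:ℝ) < l₂/2 by linarith)
  obtain ⟨δ₁, hδ₁, H₁⟩ := stolz_expansion hf hx₁ hr₁ hd₁ (le_refl (1:ℝ))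
    (show (0:ℝ) < l₁/16 by linarith)
  obtain ⟨δ₂, hδ₂, H₂⟩ := stolz_expansion hf hx₂ hr₂ hd₂ (show (1:ℝ) ≤ 3 by norm_num)
    (show (0:ℝ) < l₂/16 by linarith)
  have hD : 0 < Complex.abs (x₁ - x₂) := Complex.abs.pos (sub_ne_zero.2 hne)
  -- choose t small
  obtain ⟨t, ht0, c1, c2, c3, c4, c5, c6⟩ : ∃ t : ℝ, 0 < t ∧ t ≤ δ₁ ∧ s*t ≤ δ₂ ∧
      3*(s*t)/2 ≤ δ₃/2 ∧ s*t ≤ 1/2 ∧ t*(2+3*s) ≤ Complex.abs (x₁ - x₂)/2 ∧ t ≤ 1/2 := by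
    set T : ℝ := min (min δ₁ (1/2)) (min (min (δ₂/s) (δ₃/(3*s)))
      (min (1/(2*s)) (Complex.abs (x₁ - x₂)/(2*(2+3*s))))) with hT
    have hT1 : T ≤ δ₁ := le_trans (min_le_left _ _) (min_le_left _ _)
    have hT2 : T ≤ δ₂/s := le_trans (min_le_right _ _)
      (le_trans (min_le_left _ _) (min_le_left _ _))
    have hT3 : T ≤ δ₃/(3*s) := le_trans (min_le_right _ _)
      (le_trans (min_le_left _ _) (min_le_right _ _))
    have hT4 : T ≤ 1/(2*s) := le_trans (min_le_right _ _)
      (le_trans (min_le_right _ _) (min_le_left _ _))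
    have hT5 : T ≤ Complex.abs (x₁ - x₂)/(2*(2+3*s)) := le_trans (min_le_right _ _)
      (le_trans (min_le_right _ _) (min_le_right _ _))
    have hT6 : T ≤ 1/2 := le_trans (min_le_left _ _) (min_le_right _ _)
    have hTpos : 0 < T := by
      have p1 : (0:ℝ) < min δ₁ (1/2) := lt_min hδ₁ (by norm_num)
      have p2 : (0:ℝ) < δ₂/s := div_pos hδ₂ hs
      have p3 : (0:ℝ) < δ₃/(3*s) := div_pos hδ₃ (by linarith)
      have p4 : (0:ℝ) < 1/(2*s) := div_pos one_pos (by linarith)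
      have p5 : (0:ℝ) < Complex.abs (x₁ - x₂)/(2*(2+3*s)) := div_pos hD (by linarith)
      exact lt_min p1 (lt_min (lt_min p2 p3) (lt_min p4 p5))
    refine ⟨T, hTpos, hT1, ?_, ?_, ?_, ?_, hT6⟩
    · have := mul_le_mul_of_nonneg_left hT2 hs.le
      calc s * T ≤ s * (δ₂/s) := this
        _ = δ₂ := by field_simp
    · have h2 := mul_le_mul_of_nonneg_left hT3 (show (0:ℝ) ≤ 3*s/2 by linarith)
      have h3 : 3*s/2 * (δ₃/(3*s)) = δ₃/2 := by field_simp
      calc 3*(s*T)/2 = 3*s/2 * T := by ring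
        _ ≤ 3*s/2 * (δ₃/(3*s)) := h2
        _ = δ₃/2 := h3
    · have := mul_le_mul_of_nonneg_left hT4 hs.le
      calc s * T ≤ s * (1/(2*s)) := this
        _ ≤ 1/2 := by
            rw [mul_one_div, div_le_div_iff₀ (by linarith) (by norm_num)]
            nlinarith
    · have h2 := mul_le_mul_of_nonneg_left hT5 (show (0:ℝ) ≤ 2+3*s by linarith)
      calc T*(2+3*s) = (2+3*s)*T := by ring
        _ ≤ (2+3*s) * (Complex.abs (x₁ - x₂)/(2*(2+3*s))) := h2
        _ = Complex.abs (x₁ - x₂)/2 := by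
            rw [eq_div_iff (by norm_num)]
            field_simp
  -- the two nearby points
  obtain ⟨z₁, hz₁def⟩ : ∃ z₁ : ℂ, z₁ = ((1 - t : ℝ) : ℂ) * x₁ := ⟨_, rfl⟩
  obtain ⟨z₀, hz₀def⟩ : ∃ z₀ : ℂ, z₀ = ((1 - s*t : ℝ) : ℂ) * x₂ := ⟨_, rfl⟩
  have hst0 : 0 < s*t := mul_pos hs ht0
  have hz₁mem : z₁ ∈ stolzAngle x₁ 1 :=
    hz₁def ▸ radial_mem_stolz hx₁ (by linarith) (by linarith) le_rfl
  have hz₀mem : z₀ ∈ stolzAngle x₂ 3 :=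
    hz₀def ▸ radial_mem_stolz hx₂ (by linarith) (by linarith) (by norm_num)
  have habs₁ : Complex.abs (z₁ - x₁) = t := by
    rw [hz₁def, show ((1 - t : ℝ) : ℂ) * x₁ - x₁ = ((-t : ℝ) : ℂ) * x₁ by push_cast; ring,
      map_mul, hx₁, mul_one, Complex.abs_ofReal, abs_neg, _root_.abs_of_nonneg ht0.le]
  have habs₀ : Complex.abs (z₀ - x₂) = s*t := by
    rw [hz₀def, show ((1 - s*t : ℝ) : ℂ) * x₂ - x₂ = ((-(s*t) : ℝ) : ℂ) * x₂ by push_cast; ring,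
      map_mul, hx₂, mul_one, Complex.abs_ofReal, abs_neg, _root_.abs_of_nonneg hst0.le]
  have hE₁ := H₁ z₁ hz₁mem (by rw [habs₁]; exact c1)
  rw [habs₁] at hE₁
  have hE₂ := H₂ z₀ hz₀mem (by rw [habs₀]; exact c2)
  rw [habs₀] at hE₂
  have hd₁z : d₁ * (z₁ - x₁) = -(((t*l₁ : ℝ) : ℂ) * τ) := by
    rw [hz₁def, show ((1 - t : ℝ) : ℂ) * x₁ - x₁ = ((-t : ℝ) : ℂ) * x₁ by push_cast; ring,
      show d₁ * (((-t : ℝ) : ℂ) * x₁) = ((-t : ℝ) : ℂ) * (d₁ * x₁) by ring, hdx₁]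
    push_cast
    ring
  have hd₂z : d₂ * (z₀ - x₂) = -(((t*l₁ : ℝ) : ℂ) * τ) := by
    have hslC : (s:ℂ)*(l₂:ℂ) = (l₁:ℂ) := by exact_mod_cast hsl
    rw [hz₀def, show ((1 - s*t : ℝ) : ℂ) * x₂ - x₂ = ((-(s*t) : ℝ) : ℂ) * x₂ by push_cast; ring,
      show d₂ * (((-(s*t) : ℝ) : ℂ) * x₂) = ((-(s*t) : ℝ) : ℂ) * (d₂ * x₂) by ring, hdx₂]
    push_cast
    linear_combination (-(t:ℂ)*τ) * hslC
  have hA : Complex.abs (f z₁ - (τ - ((t*l₁ : ℝ) : ℂ) * τ)) ≤ l₁/16 * t := by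
    have e : f z₁ - τ - d₁ * (z₁ - x₁) = f z₁ - (τ - ((t*l₁ : ℝ) : ℂ) * τ) := by
      rw [hd₁z]; ring
    rwa [e] at hE₁
  have hB : Complex.abs (f z₀ - (τ - ((t*l₁ : ℝ) : ℂ) * τ)) ≤ l₂/16 * (s*t) := by
    have e : f z₀ - τ - d₂ * (z₀ - x₂) = f z₀ - (τ - ((t*l₁ : ℝ) : ℂ) * τ) := by
      rw [hd₂z]; ring
    rwa [e] at hE₂
  have hstl : l₂ * (s*t) = l₁ * t := by rw [show l₂ * (s*t) = (s*l₂)*t by ring, hsl]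
  have hdist : Complex.abs (f z₁ - f z₀) ≤ l₁*t/8 := by
    have h1 := Complex.abs.sub_le (f z₁) (τ - ((t*l₁ : ℝ) : ℂ) * τ) (f z₀)
    have h2 : Complex.abs ((τ - ((t*l₁ : ℝ) : ℂ) * τ) - f z₀)
        = Complex.abs (f z₀ - (τ - ((t*l₁ : ℝ) : ℂ) * τ)) := by
      rw [show (τ - ((t*l₁ : ℝ) : ℂ) * τ) - f z₀ = -(f z₀ - (τ - ((t*l₁ : ℝ) : ℂ) * τ)) by ring,
        Complex.abs.map_neg]
    rw [h2] at h1
    have h3 : l₂/16 * (s*t) = l₁/16 * t := by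
      rw [show l₂/16 * (s*t) = (l₂*(s*t))/16 by ring, hstl]; ring
    linarith
  -- the closed ball around z₀
  have hball : ∀ w ∈ Metric.closedBall z₀ (s*t/2), w ∈ stolzAngle x₂ 3 ∧
      Complex.abs (w - x₂) < δ₃ := by
    intro w hw
    have hw1 : Complex.abs (w - z₀) ≤ s*t/2 := by
      have := Metric.mem_closedBall.1 hw
      rwa [Complex.dist_eq] at this
    have habsz₀ : Complex.abs z₀ = 1 - s*t := hz₀def ▸ abs_radial hx₂ (by linarith)
    have hw2 : Complex.abs w ≤ 1 - s*t/2 := by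
      calc Complex.abs w = Complex.abs (z₀ + (w - z₀)) := by
            rw [show z₀ + (w - z₀) = w by ring]
        _ ≤ Complex.abs z₀ + Complex.abs (w - z₀) := Complex.abs.add_le _ _
        _ ≤ (1 - s*t) + s*t/2 := by rw [habsz₀]; linarith
        _ = 1 - s*t/2 := by ring
    have hw3 : Complex.abs (w - x₂) ≤ 3*(s*t)/2 := by
      have h4 := Complex.abs.sub_le w z₀ x₂
      rw [habs₀] at h4
      linarith
    refine ⟨⟨show Complex.abs w < 1 by linarith, show Complex.abs (x₂ - w) ≤ 3 * (1 - Complex.abs w) from ?_⟩, by linarith⟩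
    have h5 : Complex.abs (x₂ - w) = Complex.abs (w - x₂) := by
      rw [show x₂ - w = -(w - x₂) by ring, Complex.abs.map_neg]
    rw [h5]
    linarith
  have hballsub : Metric.closedBall z₀ (s*t/2) ⊆ unitDisc := fun w hw => ((hball w hw).1).1
  -- f approximates multiplication by d₂ on the ball
  have hcoe : ((‖d₂‖₊/2 : ℝ≥0) : ℝ) = l₂/2 := by
    rw [NNReal.coe_div, coe_nnnorm, Complex.norm_eq_abs, habs_d₂]
    norm_num
  have happrox : ApproximatesLinearOn f (d₂ • ContinuousLinearMap.id ℂ ℂ)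
      (Metric.closedBall z₀ (s*t/2)) (‖d₂‖₊/2) := by
    intro a ha b hb
    have hseg : segment ℝ b a ⊆ Metric.closedBall z₀ (s*t/2) :=
      (convex_closedBall _ _).segment_subset hb ha
    have hder : ∀ w ∈ segment ℝ b a, Complex.abs (deriv f w - d₂) ≤ l₂/2 :=
      fun w hw => le_of_lt (H₃ w ((hball w (hseg hw)).1) ((hball w (hseg hw)).2))
    have hmain := norm_sub_sub_le hf.1 (Set.Subset.trans hseg hballsub) hder
    show ‖f a - f b - (d₂ • ContinuousLinearMap.id ℂ ℂ) (a - b)‖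
      ≤ (‖d₂‖₊/2 : ℝ≥0) * ‖a - b‖
    simp only [ContinuousLinearMap.smul_apply, ContinuousLinearMap.id_apply, smul_eq_mul]
    rw [Complex.norm_eq_abs, Complex.norm_eq_abs, hcoe]
    exact hmain
  have hsurj := happrox.surjOn_closedBall_of_nonlinearRightInverse (mulRightInv d₂ hd₂0)
    (show (0:ℝ) ≤ s*t/2 by linarith) (subset_refl _)
  have hnninv : (((mulRightInv d₂ hd₂0).nnnorm : ℝ))⁻¹ = l₂ := by
    show (((‖d₂‖₊⁻¹ : ℝ≥0) : ℝ))⁻¹ = l₂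
    rw [NNReal.coe_inv, coe_nnnorm, inv_inv, Complex.norm_eq_abs, habs_d₂]
  have hfmem : f z₁ ∈ Metric.closedBall (f z₀)
      (((((mulRightInv d₂ hd₂0).nnnorm : ℝ))⁻¹ - ((‖d₂‖₊/2 : ℝ≥0) : ℝ)) * (s*t/2)) := by
    rw [Metric.mem_closedBall, Complex.dist_eq, hnninv, hcoe]
    have h6 : (l₂ - l₂/2) * (s*t/2) = l₂*(s*t)/4 := by ring
    rw [h6, hstl, Complex.norm_eq_abs]
    nlinarith [mul_pos hl₁ ht0]
  obtain ⟨z₂, hz₂ball, hz₂eq⟩ := hsurj hfmem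
  have hz₂D : z₂ ∈ unitDisc := hballsub hz₂ball
  have hz₁D : z₁ ∈ unitDisc := (show Complex.abs z₁ < 1 from hz₁mem.1)
  have heq : z₂ = z₁ := hinj hz₂D hz₁D hz₂eq
  -- contradiction with x₁ ≠ x₂
  have h7 : Complex.abs (z₂ - x₂) ≤ 3*(s*t)/2 := by
    have hw1 : Complex.abs (z₂ - z₀) ≤ s*t/2 := by
      have := Metric.mem_closedBall.1 hz₂ball
      rwa [Complex.dist_eq] at this
    have h8 := Complex.abs.sub_le z₂ z₀ x₂
    rw [habs₀] at h8
    linarith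
  have h9 : Complex.abs (x₁ - x₂) ≤ t + 3*(s*t)/2 := by
    have h10 := Complex.abs.sub_le x₁ z₁ x₂
    have h11 : Complex.abs (x₁ - z₁) = t := by
      rw [show x₁ - z₁ = -(z₁ - x₁) by ring, Complex.abs.map_neg, habs₁]
    rw [h11] at h10
    rw [← heq] at h10
    linarith
  have h12 : t + 3*(s*t)/2 = t*(2+3*s)/2 := by ring
  linarith
end

section
/- Let (φ_t)_{t≥0} be a continuous semigroup of holomorphic self-maps of the unit disc 𝔻 with infinitesimal generator G, and let τ ∈ ∂𝔻. For t > 0 set σ_t := (μ_{t,τ} − δ_τ)/t, where μ_{t,τ} is the Aleksandrov–Clark measure of φ_t at τ. Then for every fixed z ∈ 𝔻, lim_{t→0⁺} ∫_{∂𝔻} P(ζ,z) dσ_t(ζ) = 2 Re( G(z)·τ/(τ−z)² ). -/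
open Complex MeasureTheory Filter Topology Set
open scoped ENNReal NNReal

/-- pointwise limit of the Poisson integrals of `σ_t = (μ_{t,τ} − δ_τ)/t`. -/
theorem statement17
    (φ : ℝ → ℂ → ℂ) (hφ : IsCtsSemigroup φ)
    (G : ℂ → ℂ) (hG : IsInfGenerator φ G)
    (τ : ℂ) (hτ : ‖τ‖ = 1)
    (μtτ : ℝ → MeasureTheory.Measure ℂ)
    (hμ : ∀ t : ℝ, 0 ≤ t → IsClarkMeasure (φ t) τ (μtτ t)) :
    ∀ z ∈ unitDisc,
      Filter.Tendsto
        (fun t : ℝ => (1 / t) * ((∫ ζ, poissonKernelDisc ζ z ∂(μtτ t)) - poissonKernelDisc τ z))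
        (𝓝[>] (0 : ℝ)) (𝓝 (2 * (G z * τ / (τ - z) ^ 2).re)) := by
  intro z hz
  have hz1 : ‖z‖ < 1 := hz
  have h0 : φ 0 z = z := hφ.2.1 z hz
  have hne : τ - z ≠ 0 := by
    intro h
    have hτz : τ = z := sub_eq_zero.mp h
    rw [← hτz, hτ] at hz1
    exact lt_irrefl 1 hz1
  -- derivative of s ↦ φ s z at 0 is G z
  have hφ' : HasDerivAt (fun s : ℝ => φ s z) (G z) 0 := by
    have := hG.2 z hz 0 le_rfl
    rwa [h0] at this
  have hnum : HasDerivAt (fun s : ℝ => τ + φ s z) (G z) 0 := by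
    have := (hasDerivAt_const (0 : ℝ) τ).add hφ'
    rw [zero_add] at this
    exact this
  have hden : HasDerivAt (fun s : ℝ => τ - φ s z) (-G z) 0 := by
    have := (hasDerivAt_const (0 : ℝ) τ).sub hφ'
    rw [zero_sub] at this
    exact this
  have hd0 : τ - φ 0 z ≠ 0 := by rwa [h0]
  have hg : HasDerivAt (fun s : ℝ => (τ + φ s z) / (τ - φ s z))
      (2 * (G z * τ / (τ - z) ^ 2)) 0 := by
    have := hnum.div hden hd0
    refine HasDerivAt.congr_deriv this ?_
    rw [h0, ← mul_div_assoc]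
    congr 1
    ring
  set c : ℂ := 2 * (G z * τ / (τ - z) ^ 2) with hc
  have hre : HasDerivAt (fun s : ℝ => ((τ + φ s z) / (τ - φ s z)).re) c.re 0 :=
    (Complex.reCLM.hasFDerivAt.comp_hasDerivAt 0 hg)
  have hcre : c.re = 2 * (G z * τ / (τ - z) ^ 2).re := by
    simp [hc, Complex.mul_re]
  -- the value at 0 is the poisson kernel at τ
  have hP : ((τ + z) / (τ - z)).re = poissonKernelDisc τ z := by
    have hnsτ : Complex.normSq τ = 1 := by
      rw [← Complex.sq_norm, hτ]; norm_num
    have hns : Complex.normSq (τ - z) ≠ 0 := by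
      simpa using hne
    rw [Complex.div_re]
    unfold poissonKernelDisc
    rw [Complex.sq_norm, Complex.sq_norm]
    have habs : Complex.normSq (z - τ) = Complex.normSq (τ - z) := by
      rw [← neg_sub z τ, Complex.normSq_neg]
    rw [habs]
    simp only [Complex.normSq_apply] at *
    simp only [Complex.add_re, Complex.add_im, Complex.sub_re, Complex.sub_im]
    rw [← add_div]
    congr 1
    linear_combination hnsτ
  have hslope : Tendsto (fun t : ℝ => (((τ + φ t z) / (τ - φ t z)).re
        - ((τ + φ 0 z) / (τ - φ 0 z)).re) / (t - 0)) (𝓝[≠] (0:ℝ)) (𝓝 c.re) := by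
    have h2 := hasDerivAt_iff_tendsto_slope.mp hre
    refine h2.congr fun t => ?_
    simp only [slope_def_field]
  rw [← hcre]
  have hmono : 𝓝[>] (0:ℝ) ≤ 𝓝[≠] (0:ℝ) :=
    nhdsWithin_mono 0 (fun x hx => ne_of_gt hx)
  refine (hslope.mono_left hmono).congr' ?_
  filter_upwards [self_mem_nhdsWithin] with t ht
  have ht0 : (0:ℝ) ≤ t := le_of_lt ht
  have hint : ((τ + φ t z) / (τ - φ t z)).re = ∫ ζ, poissonKernelDisc ζ z ∂(μtτ t) :=
    (hμ t ht0).2.2 z hz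
  rw [hint, h0, hP]
  rw [sub_zero, div_eq_mul_inv, mul_comm, one_div]
end
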